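/- There exists a constant C > 0 such that for all positive integers N, |∑_{n=1}^{N} Φ(n) − (2^{N+1} − 2·2^{⌊N/2⌋} − 2·2^{⌊N/3⌋})| ≤ C·2^{N/5}, where 2^{N/5} denotes the real number 2 raised to the power N/5. -/

import Mathlib

/-- `Phi n` is the number of nonempty subsets of `{1, ..., n}` relatively prime to `n`. -/
def Phi (n : ℕ) : ℕ :=
  ((Finset.Icc 1 n).powerset.filter fun A => A.Nonempty ∧ (insert n A).gcd id = 1).card

/-!
Detecting `gcd (A ∪ {n}) = 1` by `∑_{d ∣ gcd (A ∪ {n})} μ(d)` and counting, for each `d ∣ n`,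
the nonempty sets of multiples of `d` in `{1, ..., n}` gives
`Φ(n) = ∑_{d ∣ n} μ(d) (2^{n/d} - 1)`, i.e. `Φ = μ * (2^· - 1)`. Summing the Dirichlet
convolution up to `N` yields `∑_{d ≤ N} μ(d) (2^{⌊N/d⌋+1} - 2 - ⌊N/d⌋)`. The terms `d = 1, 2, 3`
give the main term (`μ(4) = 0`), the term `d = 5` is `O(2^{N/5})`, and the at most `N` terms with
`d ≥ 6` add up to `O(N 2^{N/6}) = O(2^{N/5})`.
-/

open Finset ArithmeticFunction
open scoped ArithmeticFunction.Moebius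

theorem card_filter_powerset_nonempty_forall {α : Type*} [DecidableEq α] (s : Finset α)
    (p : α → Prop) [DecidablePred p] :
    #{A ∈ s.powerset | A.Nonempty ∧ ∀ a ∈ A, p a} = 2 ^ #{a ∈ s | p a} - 1 := by
  have : {A ∈ s.powerset | A.Nonempty ∧ ∀ a ∈ A, p a} = {a ∈ s | p a}.powerset.erase ∅ := by
    ext A
    simp only [mem_filter, mem_powerset, mem_erase, subset_iff, nonempty_iff_ne_empty]
    grind
  rw [this, card_erase_of_mem (empty_mem_powerset _), card_powerset]

theorem sum_divisors_moebius (n : ℕ) : ∑ d ∈ n.divisors, μ d = if n = 1 then 1 else 0 := by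
  have := congr_arg (· n) moebius_mul_coe_zeta
  simpa only [coe_mul_zeta_apply, one_apply] using this

theorem dvd_gcd_insert_iff {n d : ℕ} (A : Finset ℕ) (hd : d ∣ n) :
    d ∣ (insert n A).gcd id ↔ ∀ a ∈ A, d ∣ a := by
  rw [gcd_insert, _root_.dvd_gcd_iff, Finset.dvd_gcd_iff]
  simp [hd]

theorem card_nonempty_coprime_subsets {n : ℕ} (hn : n ≠ 0) (s : Finset ℕ) :
    (#{A ∈ s.powerset | A.Nonempty ∧ (insert n A).gcd id = 1} : ℤ) =
      ∑ d ∈ n.divisors, μ d * (2 ^ #{a ∈ s | d ∣ a} - 1) := by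
  calc (#{A ∈ s.powerset | A.Nonempty ∧ (insert n A).gcd id = 1} : ℤ)
      = ∑ A ∈ s.powerset with A.Nonempty, ∑ d ∈ ((insert n A).gcd id).divisors, μ d := by
        simp_rw [sum_divisors_moebius, sum_boole, filter_filter]
      _ = ∑ A ∈ s.powerset with A.Nonempty, ∑ d ∈ n.divisors,
            if d ∣ (insert n A).gcd id then μ d else 0 := by
        refine sum_congr rfl fun A _ => ?_
        rw [← sum_filter, Nat.divisors_filter_dvd_of_dvd hn (gcd_dvd (mem_insert_self n A))]
      _ = ∑ d ∈ n.divisors, μ d * #{A ∈ s.powerset | A.Nonempty ∧ ∀ a ∈ A, d ∣ a} := by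
        rw [sum_comm]
        refine sum_congr rfl fun d hd => ?_
        simp_rw [dvd_gcd_insert_iff _ (Nat.dvd_of_mem_divisors hd)]
        rw [← sum_filter, sum_const, nsmul_eq_mul, mul_comm, filter_filter]
      _ = ∑ d ∈ n.divisors, μ d * (2 ^ #{a ∈ s | d ∣ a} - 1) := by
        simp_rw [card_filter_powerset_nonempty_forall]
        push_cast [Nat.one_le_two_pow]
        rfl

def twoPowSubOne : ArithmeticFunction ℤ := ⟨fun m => 2 ^ m - 1, by simp⟩

theorem Phi_eq_moebius_mul (n : ℕ) : (Phi n : ℤ) = (μ * twoPowSubOne) n := by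
  rcases eq_or_ne n 0 with rfl | hn
  · simp [Phi]
  have hIcc : Icc 1 n = Ioc 0 n := Icc_add_one_left_eq_Ioc 0 n
  rw [Phi, card_nonempty_coprime_subsets hn, mul_apply,
    Nat.sum_divisorsAntidiagonal (fun d m => μ d * twoPowSubOne m), hIcc]
  simp [Nat.Ioc_filter_dvd_card_eq_div, twoPowSubOne]

theorem sum_Ioc_two_pow_sub_one (k : ℕ) :
    ∑ m ∈ Ioc 0 k, ((2 : ℤ) ^ m - 1) = 2 ^ (k + 1) - 2 - k := by
  induction k with
  | zero => simp
  | succ k ih =>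
    rw [sum_Ioc_succ_top (Nat.zero_le k), ih]
    push_cast
    ring

theorem sum_Ioc_Phi (N : ℕ) :
    ∑ n ∈ Ioc 0 N, (Phi n : ℤ) =
      ∑ d ∈ Ioc 0 N, μ d * (2 ^ (N / d + 1) - 2 - ((N / d : ℕ) : ℤ)) := by
  simp_rw [Phi_eq_moebius_mul, sum_Ioc_mul_eq_sum_sum, twoPowSubOne, coe_mk,
    sum_Ioc_two_pow_sub_one]

theorem natCast_add_two_le_two_pow_succ (k : ℕ) : (k : ℤ) + 2 ≤ 2 ^ (k + 1) := by
  have : k + 2 ≤ 2 ^ (k + 1) := Nat.lt_two_pow_self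
  exact_mod_cast this

theorem abs_moebius_mul_le (d k : ℕ) :
    |μ d * (2 ^ (k + 1) - 2 - (k : ℤ))| ≤ 2 ^ (k + 1) := by
  have hk := natCast_add_two_le_two_pow_succ k
  rw [abs_mul]
  calc |(μ d : ℤ)| * |2 ^ (k + 1) - 2 - (k : ℤ)| ≤ 1 * 2 ^ (k + 1) := by
        gcongr
        · exact abs_moebius_le_one
        · rw [abs_le]; constructor <;> linarith
    _ = 2 ^ (k + 1) := one_mul _

theorem abs_sum_Ioc_Phi_sub_le (N : ℕ) :
    |∑ n ∈ Ioc 0 N, (Phi n : ℤ) - (2 ^ (N + 1) - 2 * 2 ^ (N / 2) - 2 * 2 ^ (N / 3))| ≤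
      2 * 2 ^ (N / 5) + 2 * N * 2 ^ (N / 6) + N + 2 := by
  set f : ℕ → ℤ := fun d => μ d * (2 ^ (N / d + 1) - 2 - ((N / d : ℕ) : ℤ))
  -- The terms with `N / d = 0` vanish; padding to `d < N + 6` splits off `d < 6` for every `N`.
  have hrange : ∑ d ∈ Ioc 0 N, f d = ∑ d ∈ range (N + 6), f d := by
    refine sum_subset (fun d hd => by simp only [mem_Ioc, mem_range] at hd ⊢; omega)
      fun d _ hd => ?_
    have : N / d = 0 := Nat.div_eq_zero_iff.2 (by simp only [mem_Ioc] at hd; omega)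
    simp only [f, this]
    norm_num
  have hhead : ∑ d ∈ range 6, f d = (2 ^ (N + 1) - 2 - N)
      - (2 * 2 ^ (N / 2) - 2 - ((N / 2 : ℕ) : ℤ)) - (2 * 2 ^ (N / 3) - 2 - ((N / 3 : ℕ) : ℤ))
      - (2 * 2 ^ (N / 5) - 2 - ((N / 5 : ℕ) : ℤ)) := by
    simp only [f, sum_range_succ, sum_range_zero, ArithmeticFunction.map_zero, moebius_apply_one,
      moebius_apply_prime Nat.prime_two, moebius_apply_prime Nat.prime_three,
      moebius_apply_prime Nat.prime_five,
      moebius_eq_zero_of_not_squarefree (by decide : ¬ Squarefree 4), Nat.div_one]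
    ring
  have htail : |∑ d ∈ Ico 6 (N + 6), f d| ≤ 2 * N * 2 ^ (N / 6) := by
    calc |∑ d ∈ Ico 6 (N + 6), f d| ≤ ∑ d ∈ Ico 6 (N + 6), |f d| := abs_sum_le_sum_abs _ _
      _ ≤ ∑ d ∈ Ico 6 (N + 6), 2 ^ (N / 6 + 1) := by
        refine sum_le_sum fun d hd => (abs_moebius_mul_le d _).trans ?_
        exact pow_le_pow_right₀ one_le_two
          (Nat.succ_le_succ (Nat.div_le_div_left (mem_Ico.1 hd).1 (by norm_num)))
      _ = 2 * N * 2 ^ (N / 6) := by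
        simp only [sum_const, Nat.card_Ico, add_tsub_cancel_right, nsmul_eq_mul, pow_succ]
        ring
  have h2 : ((N / 2 : ℕ) : ℤ) ≤ N := by exact_mod_cast Nat.div_le_self N 2
  have h3 : ((N / 3 : ℕ) : ℤ) ≤ N := by exact_mod_cast Nat.div_le_self N 3
  have h5 := natCast_add_two_le_two_pow_succ (N / 5)
  rw [pow_succ] at h5
  rw [sum_Ioc_Phi, hrange, ← sum_range_add_sum_Ico _ (by omega : 6 ≤ N + 6), hhead]
  rw [abs_le] at htail ⊢
  constructor <;> linarith [htail.1, htail.2]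

theorem pow_div_le_rpow_div {x : ℝ} (hx : 1 ≤ x) (N k : ℕ) :
    x ^ (N / k) ≤ x ^ ((N : ℝ) / k) := by
  rw [← Real.rpow_natCast]
  exact Real.rpow_le_rpow_of_exponent_le hx Nat.cast_div_le

theorem le_sixty_mul_two_rpow_div_thirty (x : ℝ) : x ≤ 60 * 2 ^ (x / 30) := by
  rw [Real.rpow_def_of_pos two_pos]
  have hlog : 1 / 2 < Real.log 2 := by linarith [Real.log_two_gt_d9]
  have hexp := Real.add_one_le_exp (Real.log 2 * (x / 30))
  rcases le_or_gt x 0 with hx | hx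
  · linarith [Real.exp_pos (Real.log 2 * (x / 30))]
  · nlinarith

theorem natCast_mul_two_pow_div_six_le (N : ℕ) :
    (N : ℝ) * 2 ^ (N / 6) ≤ 60 * 2 ^ ((N : ℝ) / 5) :=
  calc (N : ℝ) * 2 ^ (N / 6) ≤ 60 * 2 ^ ((N : ℝ) / 30) * 2 ^ ((N : ℝ) / 6) := by
        gcongr
        · exact le_sixty_mul_two_rpow_div_thirty _
        · exact pow_div_le_rpow_div one_le_two N 6
    _ = 60 * 2 ^ ((N : ℝ) / 5) := by
        rw [mul_assoc, ← Real.rpow_add two_pos]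
        ring_nf

/-- Partial sum of `Φ`:
`∑_{n ≤ N} Φ(n) = 2^{N+1} - 2·2^{⌊N/2⌋} - 2·2^{⌊N/3⌋} + O(2^{N/5})`. -/
theorem sum_Phi_asymptotic :
    ∃ C : ℝ, 0 < C ∧ ∀ N : ℕ, 0 < N →
      |(∑ n ∈ Finset.Icc 1 N, (Phi n : ℝ)) -
        (2 ^ (N + 1) - 2 * 2 ^ (N / 2) - 2 * 2 ^ (N / 3))| ≤
      C * (2 : ℝ) ^ ((N : ℝ) / 5) := by
  refine ⟨302, by norm_num, fun N hN => ?_⟩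
  have herr : |(∑ n ∈ Icc 1 N, (Phi n : ℝ)) - (2 ^ (N + 1) - 2 * 2 ^ (N / 2) - 2 * 2 ^ (N / 3))|
      ≤ 2 * 2 ^ (N / 5) + 2 * N * 2 ^ (N / 6) + N + 2 := by
    have := abs_sum_Ioc_Phi_sub_le N
    rw [← Icc_add_one_left_eq_Ioc] at this
    exact_mod_cast this
  have h5 := pow_div_le_rpow_div one_le_two N 5
  have h6 := natCast_mul_two_pow_div_six_le N
  have hN1 : (1 : ℝ) ≤ N := by exact_mod_cast hN
  have hN6 : (N : ℝ) ≤ N * 2 ^ (N / 6) :=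
    le_mul_of_one_le_right (Nat.cast_nonneg N) (one_le_pow₀ one_le_two)
  linarith
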